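/- Let λ > -1, σ ∈ ℝ. If x : ℝ → ℝ is differentiable with x(t) < 1 for all t and satisfies x'(t) = (1 - x) + λx(1-x) + σx(1-x)w(t) for a continuous function w, then X(t) := (1 - x(t))^(1/(1+λ)) is differentiable and satisfies X'(t) = -X + (λ/(1+λ))X^(2+λ) - (σ/(1+λ))(X - X^(2+λ))w(t), where all functions are evaluated at t. -/

import Mathlib

open Real Filter

theorem stmt3 (lam σ : ℝ) (hlam : -1 < lam) (x w : ℝ → ℝ) (hw : Continuous w)
    (hx1 : ∀ t, x t < 1)
    (hx : ∀ t, HasDerivAt x ((1 - x t) + lam * x t * (1 - x t) + σ * x t * (1 - x t) * w t) t) :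
    ∀ t, HasDerivAt (fun s => (1 - x s) ^ (1 / (1 + lam)))
      (-((1 - x t) ^ (1 / (1 + lam)))
        + lam / (1 + lam) * ((1 - x t) ^ (1 / (1 + lam))) ^ (2 + lam)
        - σ / (1 + lam) * ((1 - x t) ^ (1 / (1 + lam))
            - ((1 - x t) ^ (1 / (1 + lam))) ^ (2 + lam)) * w t) t := by
  intro t
  have hL : (0:ℝ) < 1 + lam := by linarith
  have hu : (0:ℝ) < 1 - x t := by linarith [hx1 t]
  set p : ℝ := 1 / (1 + lam) with hp
  have hf : HasDerivAt (fun s => 1 - x s)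
      (-((1 - x t) + lam * x t * (1 - x t) + σ * x t * (1 - x t) * w t)) t := by
    simpa using (hx t).const_sub 1
  have h := hf.rpow_const (p := p) (Or.inl hu.ne')
  convert h using 1
  set u := 1 - x t with hud
  have hA : (u ^ p) ^ (2 + lam) = u * u ^ p := by
    rw [← Real.rpow_mul hu.le]
    have : p * (2 + lam) = 1 + p := by
      rw [hp]; field_simp; ring
    rw [this, Real.rpow_add hu, Real.rpow_one]
  have hpm : u ^ (p - 1) = u ^ p / u := by
    rw [Real.rpow_sub hu, Real.rpow_one]
  rw [hA, hpm]
  rw [hp]; field_simp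
  ring
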